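/- arXiv:2502.11238 — 3 statements merged into one kernel-verified Lean document; each statement's English description precedes it below -/
import Mathlib

section
/- Let P_π be a row-stochastic S×S matrix, γ ∈ (0,1), and h ∈ ℝ^S. Then ‖(I − γ P_π)^{-1} (I − P_π) h‖_∞ ≤ span(h), where span(h) = max_s h(s) − min_s h(s). -/
open Matrix

/-- The span seminorm: span(x) = max_s x(s) − min_s x(s). -/
noncomputable def spanSem {S : Type*} [Fintype S] [Nonempty S] (x : S → ℝ) : ℝ :=
  (⨆ s, x s) - ⨅ s, x s

/-!
Put `y = (I - γP)⁻¹ (I - P) h - h`. Then `(I - γP) y = (1 - γ) (-P h)`, i.e. `y` is a fixed point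
of `y ↦ γ P y + (1 - γ) (-P h)`. By the maximum principle for the stochastic matrix `P`, `y` takes
values between the extreme values of `-P h`, hence in `[-max h, -min h]`; adding `h` gives the bound.
-/

namespace Matrix

variable {R n : Type*} [Fintype n] [DecidableEq n] [Field R] [LinearOrder R]
  [IsStrictOrderedRing R] {P : Matrix n n R}

theorem mulVec_le_of_mem_rowStochastic (hP : P ∈ rowStochastic R n) {v : n → R} {c : R}
    (hv : ∀ j, v j ≤ c) (i : n) : (P *ᵥ v) i ≤ c :=
  calc (P *ᵥ v) i = ∑ j, P i j * v j := rfl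
    _ ≤ ∑ j, P i j * c :=
      Finset.sum_le_sum fun j _ => mul_le_mul_of_nonneg_left (hv j) (hP.1 i j)
    _ = c := by rw [← Finset.sum_mul, sum_row_of_mem_rowStochastic hP, one_mul]

theorem le_mulVec_of_mem_rowStochastic (hP : P ∈ rowStochastic R n) {v : n → R} {c : R}
    (hv : ∀ j, c ≤ v j) (i : n) : c ≤ (P *ᵥ v) i := by
  have := mulVec_le_of_mem_rowStochastic hP (v := -v) (c := -c) (fun j => neg_le_neg (hv j)) i
  rwa [mulVec_neg, Pi.neg_apply, neg_le_neg_iff] at this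

/-- Maximum principle: at a maximiser `k` of `y`, `(1 - γ) y k ≤ y k - γ (P y) k = (1 - γ) g k`. -/
theorem apply_le_of_one_sub_smul_mulVec_eq (hP : P ∈ rowStochastic R n) {γ : R} (hγ0 : 0 ≤ γ)
    (hγ1 : γ < 1) {y g : n → R} {c : R} (hy : (1 - γ • P) *ᵥ y = (1 - γ) • g)
    (hg : ∀ j, g j ≤ c) (i : n) : y i ≤ c := by
  have : Nonempty n := ⟨i⟩
  obtain ⟨k, hk⟩ := Finite.exists_max y
  have hyk : y k - γ * (P *ᵥ y) k = (1 - γ) * g k := by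
    simpa [sub_mulVec, smul_mulVec] using congrFun hy k
  have hPy : (P *ᵥ y) k ≤ y k := mulVec_le_of_mem_rowStochastic hP hk k
  have hyk_le : (1 - γ) * y k ≤ (1 - γ) * c := by
    nlinarith [mul_le_mul_of_nonneg_left hPy hγ0, hg k]
  exact (hk i).trans (le_of_mul_le_mul_left hyk_le (sub_pos.2 hγ1))

theorem le_apply_of_one_sub_smul_mulVec_eq (hP : P ∈ rowStochastic R n) {γ : R} (hγ0 : 0 ≤ γ)
    (hγ1 : γ < 1) {y g : n → R} {c : R} (hy : (1 - γ • P) *ᵥ y = (1 - γ) • g)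
    (hg : ∀ j, c ≤ g j) (i : n) : c ≤ y i := by
  have hy' : (1 - γ • P) *ᵥ -y = (1 - γ) • -g := by rw [mulVec_neg, hy, smul_neg]
  simpa using apply_le_of_one_sub_smul_mulVec_eq hP hγ0 hγ1 hy' (fun j => neg_le_neg (hg j)) i

theorem isUnit_one_sub_smul_of_mem_rowStochastic (hP : P ∈ rowStochastic R n) {γ : R}
    (hγ0 : 0 ≤ γ) (hγ1 : γ < 1) : IsUnit (1 - γ • P) := by
  refine mulVec_injective_iff_isUnit.1 fun v w hvw => funext fun i => ?_
  have hker : (1 - γ • P) *ᵥ (v - w) = (1 - γ) • 0 := by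
    rw [mulVec_sub, sub_eq_zero.2 hvw, smul_zero]
  have hle := apply_le_of_one_sub_smul_mulVec_eq hP hγ0 hγ1 hker (fun _ => le_rfl) i
  have hge := le_apply_of_one_sub_smul_mulVec_eq hP hγ0 hγ1 hker (fun _ => le_rfl) i
  exact sub_eq_zero.1 (le_antisymm hle hge)

end Matrix

/-- ‖(I − γ P_π)^{-1} (I − P_π) h‖_∞ ≤ span(h) for a row-stochastic matrix P_π. -/
theorem stmt10 {S : Type*} [Fintype S] [Nonempty S] [DecidableEq S]
    (P : Matrix S S ℝ) (hP0 : ∀ i j, 0 ≤ P i j) (hP1 : ∀ i, ∑ j, P i j = 1)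
    (γ : ℝ) (hγ0 : 0 < γ) (hγ1 : γ < 1) (h : S → ℝ) :
    ‖((1 : Matrix S S ℝ) - γ • P)⁻¹ *ᵥ (((1 : Matrix S S ℝ) - P) *ᵥ h)‖ ≤ spanSem h := by
  have hP : P ∈ rowStochastic ℝ S := mem_rowStochastic_iff_sum.2 ⟨hP0, hP1⟩
  set A : Matrix S S ℝ := 1 - γ • P
  have hA : IsUnit A.det :=
    (isUnit_iff_isUnit_det A).1 (isUnit_one_sub_smul_of_mem_rowStochastic hP hγ0.le hγ1)
  set x := A⁻¹ *ᵥ ((1 - P) *ᵥ h)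
  have hy : A *ᵥ (x - h) = (1 - γ) • -(P *ᵥ h) := by
    rw [mulVec_sub, mulVec_mulVec, mul_nonsing_inv A hA, one_mulVec]
    simp only [A, sub_mulVec, one_mulVec, smul_mulVec]
    module
  have hmax : ∀ j, h j ≤ ⨆ s, h s := le_ciSup (Finite.bddAbove_range h)
  have hmin : ∀ j, ⨅ s, h s ≤ h j := ciInf_le (Finite.bddBelow_range h)
  have hup (i : S) : x i - h i ≤ -⨅ s, h s :=
    apply_le_of_one_sub_smul_mulVec_eq hP hγ0.le hγ1 hy
      (fun j => neg_le_neg (le_mulVec_of_mem_rowStochastic hP hmin j)) i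
  have hlow (i : S) : -⨆ s, h s ≤ x i - h i :=
    le_apply_of_one_sub_smul_mulVec_eq hP hγ0.le hγ1 hy
      (fun j => neg_le_neg (mulVec_le_of_mem_rowStochastic hP hmax j)) i
  have hspan : 0 ≤ spanSem h :=
    sub_nonneg.2 (ciInf_le_ciSup (Finite.bddBelow_range h) (Finite.bddAbove_range h))
  refine (pi_norm_le_iff_of_nonneg hspan).2 fun i => ?_
  rw [Real.norm_eq_abs, abs_le, spanSem]
  constructor <;> linarith [hup i, hlow i, hmax i, hmin i]
end

section
/- Fix a stationary policy π in a finite MDP with rewards in [0,1] whose gain ρ^π is a constant vector, gain ρ^π and bias h^π satisfying the Poisson equation ρ^π + h^π = r_π + P_π h^π and P_π ρ^π = ρ^π. Then for every γ ∈ (0,1), ‖(1/(1−γ))ρ^π − V_γ^π‖_∞ ≤ span(h^π), where V_γ^π = (I − γP_π)^{-1} r_π. -/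
/-!
Put `u = ρ / (1 - γ) - V_γ + h`. Applying `I - γP` and using `Pρ = ρ`, `(I - γP) V_γ = r` and the
Poisson equation gives `u = γ P u + (1 - γ) P h`: `u` is a discounted average of itself and of `P h`,
so by the maximum principle for stochastic matrices `min h ≤ u ≤ max h`. Hence every entry of
`ρ / (1 - γ) - V_γ = u - h` lies in `[-span h, span h]`. The same maximum principle (with `h = 0`)
shows that `I - γP` is invertible.
-/

open Matrix

namespace Matrix

variable {S : Type*} [Fintype S] {P : Matrix S S ℝ}

theorem mulVec_apply_le_of_forall_le (hP0 : ∀ i j, 0 ≤ P i j) (hP1 : ∀ i, ∑ j, P i j = 1)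
    {x : S → ℝ} {b : ℝ} (hx : ∀ j, x j ≤ b) (s : S) : (P *ᵥ x) s ≤ b :=
  calc (P *ᵥ x) s = ∑ j, P s j * x j := rfl
    _ ≤ ∑ j, P s j * b := Finset.sum_le_sum fun j _ => mul_le_mul_of_nonneg_left (hx j) (hP0 s j)
    _ = b := by rw [← Finset.sum_mul, hP1 s, one_mul]

theorem le_of_eq_smul_mulVec_add (hP0 : ∀ i j, 0 ≤ P i j) (hP1 : ∀ i, ∑ j, P i j = 1)
    {γ : ℝ} (hγ0 : 0 ≤ γ) (hγ1 : γ < 1) {u y : S → ℝ}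
    (hu : u = γ • (P *ᵥ u) + (1 - γ) • (P *ᵥ y)) {b : ℝ} (hy : ∀ j, y j ≤ b) (s : S) :
    u s ≤ b := by
  have : Nonempty S := ⟨s⟩
  obtain ⟨s₀, hs₀⟩ := Finite.exists_max u
  have hPu := mulVec_apply_le_of_forall_le hP0 hP1 hs₀ s₀
  have hPy := mulVec_apply_le_of_forall_le hP0 hP1 hy s₀
  have hus₀ : u s₀ = γ * (P *ᵥ u) s₀ + (1 - γ) * (P *ᵥ y) s₀ := congrFun hu s₀
  have : u s₀ ≤ b := by nlinarith
  exact (hs₀ s).trans this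

theorem ge_of_eq_smul_mulVec_add (hP0 : ∀ i j, 0 ≤ P i j) (hP1 : ∀ i, ∑ j, P i j = 1)
    {γ : ℝ} (hγ0 : 0 ≤ γ) (hγ1 : γ < 1) {u y : S → ℝ}
    (hu : u = γ • (P *ᵥ u) + (1 - γ) • (P *ᵥ y)) {b : ℝ} (hy : ∀ j, b ≤ y j) (s : S) :
    b ≤ u s := by
  have hneg : -u = γ • (P *ᵥ -u) + (1 - γ) • (P *ᵥ -y) := by
    rw [mulVec_neg, mulVec_neg, smul_neg, smul_neg, ← neg_add, ← hu]
  simpa using le_of_eq_smul_mulVec_add hP0 hP1 hγ0 hγ1 hneg (b := -b) (by simpa using hy) s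

theorem isUnit_det_one_sub_smul [DecidableEq S] (hP0 : ∀ i j, 0 ≤ P i j)
    (hP1 : ∀ i, ∑ j, P i j = 1) {γ : ℝ} (hγ0 : 0 ≤ γ) (hγ1 : γ < 1) :
    IsUnit (1 - γ • P).det := by
  rw [isUnit_iff_ne_zero]
  intro hdet
  obtain ⟨v, hv0, hv⟩ := exists_mulVec_eq_zero_iff.mpr hdet
  have hfix : v = γ • (P *ᵥ v) + (1 - γ) • (P *ᵥ 0) := by
    rw [sub_mulVec, one_mulVec, smul_mulVec, sub_eq_zero] at hv
    simpa using hv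
  exact hv0 <| funext fun s => le_antisymm
    (le_of_eq_smul_mulVec_add hP0 hP1 hγ0 hγ1 hfix (fun _ => le_rfl) s)
    (ge_of_eq_smul_mulVec_add hP0 hP1 hγ0 hγ1 hfix (fun _ => le_rfl) s)

end Matrix

theorem norm_sub_le_spanSem {S : Type*} [Fintype S] [Nonempty S] {x y : S → ℝ}
    (hlo : ∀ s, (⨅ t, y t) ≤ x s) (hhi : ∀ s, x s ≤ ⨆ t, y t) : ‖x - y‖ ≤ spanSem y := by
  have hy_lo : ∀ s, (⨅ t, y t) ≤ y s := ciInf_le (Finite.bddBelow_range y)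
  have hy_hi : ∀ s, y s ≤ ⨆ t, y t := le_ciSup (Finite.bddAbove_range y)
  have hspan : 0 ≤ spanSem y := by
    obtain ⟨s⟩ := ‹Nonempty S›
    unfold spanSem
    linarith [hy_lo s, hy_hi s]
  refine (pi_norm_le_iff_of_nonneg hspan).mpr fun s => ?_
  rw [Real.norm_eq_abs, abs_le, spanSem, Pi.sub_apply]
  constructor <;> linarith [hlo s, hhi s, hy_lo s, hy_hi s]

theorem stmt11_general {S : Type*} [Fintype S] [Nonempty S] [DecidableEq S]
    (P : Matrix S S ℝ) (hP0 : ∀ i j, 0 ≤ P i j) (hP1 : ∀ i, ∑ j, P i j = 1)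
    (r : S → ℝ)
    (ρ h : S → ℝ)
    (hPρ : P *ᵥ ρ = ρ)
    (hPoisson : ρ + h = r + P *ᵥ h)
    (γ : ℝ) (hγ0 : 0 < γ) (hγ1 : γ < 1) :
    ‖(1 / (1 - γ)) • ρ - ((1 : Matrix S S ℝ) - γ • P)⁻¹ *ᵥ r‖ ≤ spanSem h := by
  set V := ((1 : Matrix S S ℝ) - γ • P)⁻¹ *ᵥ r
  have hV : V - γ • (P *ᵥ V) = r := by
    have hAV : (1 - γ • P) *ᵥ V = r := by
      rw [mulVec_mulVec, mul_nonsing_inv _ (isUnit_det_one_sub_smul hP0 hP1 hγ0.le hγ1),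
        one_mulVec]
    rwa [sub_mulVec, one_mulVec, smul_mulVec] at hAV
  set c := 1 / (1 - γ)
  have hc : c * (1 - γ) = 1 := one_div_mul_cancel (by linarith)
  set u := c • ρ - V + h
  have hu : u = γ • (P *ᵥ u) + (1 - γ) • (P *ᵥ h) := by
    funext s
    have hρs := congrFun hPρ s
    have hPs := congrFun hPoisson s
    have hVs := congrFun hV s
    simp only [u, mulVec_add, mulVec_sub, mulVec_smul, Pi.add_apply, Pi.sub_apply,
      Pi.smul_apply, smul_eq_mul] at hρs hPs hVs ⊢
    linear_combination (-γ * c) * hρs - hVs + hPs + ρ s * hc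
  have hgoal : c • ρ - V = u - h := by simp only [u, add_sub_cancel_right]
  rw [hgoal]
  exact norm_sub_le_spanSem
    (ge_of_eq_smul_mulVec_add hP0 hP1 hγ0.le hγ1 hu (ciInf_le (Finite.bddBelow_range h)))
    (le_of_eq_smul_mulVec_add hP0 hP1 hγ0.le hγ1 hu (le_ciSup (Finite.bddAbove_range h)))

/-- For a policy with constant gain ρ^π satisfying the Poisson equation,
‖(1/(1−γ))ρ^π − V_γ^π‖_∞ ≤ span(h^π) where V_γ^π = (I − γP_π)^{-1} r_π. -/
theorem stmt11 {S : Type*} [Fintype S] [Nonempty S] [DecidableEq S]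
    (P : Matrix S S ℝ) (hP0 : ∀ i j, 0 ≤ P i j) (hP1 : ∀ i, ∑ j, P i j = 1)
    (r : S → ℝ) (hr : ∀ s, r s ∈ Set.Icc (0 : ℝ) 1)
    (ρ h : S → ℝ)
    (hconst : ∃ c : ℝ, ρ = fun _ => c)
    (hPρ : P *ᵥ ρ = ρ)
    (hPoisson : ρ + h = r + P *ᵥ h)
    (γ : ℝ) (hγ0 : 0 < γ) (hγ1 : γ < 1) :
    ‖(1 / (1 - γ)) • ρ - ((1 : Matrix S S ℝ) - γ • P)⁻¹ *ᵥ r‖ ≤ spanSem h :=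
  stmt11_general P hP0 hP1 r ρ h hPρ hPoisson γ hγ0 hγ1
end

section
/- In a weakly communicating finite MDP, for any policy π and any γ ∈ (0,1), ρ^π ≥ ρ^⋆ − (1−γ)(‖V_γ^π − V_γ^⋆‖_∞ + span(V_γ^⋆)) 1. -/
theorem ciInf_sub_norm_sub_le_ciInf {S : Type*} [Fintype S] [Nonempty S] (f g : S → ℝ) :
    (⨅ s, g s) - ‖f - g‖ ≤ ⨅ s, f s := by
  refine le_ciInf fun t => ?_
  have hg : ⨅ s, g s ≤ g t := ciInf_le (Finite.bddBelow_range g) t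
  have hft : |f t - g t| ≤ ‖f - g‖ := norm_le_pi_norm (f - g) t
  linarith [(abs_le.mp hft).1]

theorem stmt16_general {S : Type*} [Fintype S] [Nonempty S]
    (γ : ℝ) (hγ1 : γ < 1)
    (Vpi Vstar ρpi ρstar : S → ℝ)
    (hlow : ∀ s, (1 - γ) * (⨅ s', Vpi s') ≤ ρpi s)
    (hup : ∀ s, ρstar s ≤ (1 - γ) * (⨆ s', Vstar s')) :
    ∀ s, ρstar s - (1 - γ) * (‖Vpi - Vstar‖ + spanSem Vstar) ≤ ρpi s := by
  intro s
  calc ρstar s - (1 - γ) * (‖Vpi - Vstar‖ + spanSem Vstar)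
      ≤ (1 - γ) * (⨆ s', Vstar s') - (1 - γ) * (‖Vpi - Vstar‖ + spanSem Vstar) := by
        linarith [hup s]
    _ = (1 - γ) * ((⨅ s', Vstar s') - ‖Vpi - Vstar‖) := by
        rw [spanSem]; ring
    _ ≤ (1 - γ) * ⨅ s', Vpi s' :=
        mul_le_mul_of_nonneg_left (ciInf_sub_norm_sub_le_ciInf Vpi Vstar) (sub_nonneg.2 hγ1.le)
    _ ≤ ρpi s := hlow s

/-- In a weakly communicating MDP, for any policy π and γ ∈ (0,1),
ρ^π ≥ ρ⋆ − (1−γ)(‖V_γ^π − V_γ⋆‖_∞ + span(V_γ⋆))·1.  The discounted-reduction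
bounds ρ^π ≥ (1−γ)(min_s V_γ^π(s))·1 and ρ⋆ ≤ (1−γ)(max_s V_γ⋆(s))·1 are taken
as hypotheses, and ρ⋆ is constant since the MDP is weakly communicating. -/
theorem stmt16 {S : Type*} [Fintype S] [Nonempty S]
    (γ : ℝ) (hγ0 : 0 < γ) (hγ1 : γ < 1)
    (Vpi Vstar ρpi ρstar : S → ℝ)
    (hconst : ∃ c : ℝ, ρstar = fun _ => c)
    (hlow : ∀ s, (1 - γ) * (⨅ s', Vpi s') ≤ ρpi s)
    (hup : ∀ s, ρstar s ≤ (1 - γ) * (⨆ s', Vstar s')) :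
    ∀ s, ρstar s - (1 - γ) * (‖Vpi - Vstar‖ + spanSem Vstar) ≤ ρpi s :=
  stmt16_general γ hγ1 Vpi Vstar ρpi ρstar hlow hup
end
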